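/- Let w ~ Laplace(0, b), b > 0, and define Q_Δ(w) = Δ if w > Δ, −Δ if w < −Δ, and 0 if |w| ≤ Δ. Then the mean-squared error MSE(Δ) = E[(w − Q_Δ(w))²] equals e^{−Δ/b}(2b² e^{Δ/b} − 2bΔ − Δ²), and the unique minimizer over Δ > 0 is Δ* = √2·b, which equals the standard deviation σ = √2·b of w. -/

import Mathlib

open MeasureTheory Real Set Filter

/-- Symmetric ternary quantizer with levels `{-Δ, 0, Δ}` and dead zone `[-Δ, Δ]`. -/
noncomputable def ternaryQuant (Δ w : ℝ) : ℝ :=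
  if w > Δ then Δ else if w < -Δ then -Δ else 0

lemma tq_tendsto (b : ℝ) (hb : 0 < b) (n : ℕ) :
    Tendsto (fun w : ℝ => w ^ n * Real.exp (-w / b)) atTop (nhds 0) := by
  have h1 : Tendsto (fun w : ℝ => w / b) atTop atTop :=
    tendsto_id.atTop_div_const hb
  have h2 := (tendsto_pow_mul_exp_neg_atTop_nhds_zero n).comp h1
  have h3 := h2.const_mul (b ^ n)
  rw [mul_zero] at h3
  refine h3.congr fun w => ?_
  simp only [Function.comp]
  rw [div_pow, neg_div]
  field_simp

lemma tq_int_Ioi (b Δ : ℝ) (hb : 0 < b) :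
    IntegrableOn (fun w => (w - Δ) ^ 2 * ((1 / (2 * b)) * Real.exp (-w / b))) (Ioi Δ) ∧
    ∫ w in Ioi Δ, (w - Δ) ^ 2 * ((1 / (2 * b)) * Real.exp (-w / b))
      = b ^ 2 * Real.exp (-Δ / b) := by
  set g : ℝ → ℝ := fun w =>
    -(1 / 2) * (Real.exp (-w / b) * ((w - Δ) ^ 2 + 2 * b * (w - Δ) + 2 * b ^ 2)) with hg
  have hderiv : ∀ x, HasDerivAt g ((x - Δ) ^ 2 * ((1 / (2 * b)) * Real.exp (-x / b))) x := by
    intro x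
    have h1 : HasDerivAt (fun w : ℝ => -w / b) (-1 / b) x := by
      simpa using ((hasDerivAt_id x).neg.div_const b)
    have h2 := h1.exp
    have hsub : HasDerivAt (fun w : ℝ => w - Δ) 1 x := (hasDerivAt_id x).sub_const Δ
    have h3 : HasDerivAt (fun w : ℝ => (w - Δ) ^ 2 + 2 * b * (w - Δ) + 2 * b ^ 2)
        (2 * (x - Δ) + 2 * b) x := by
      have hp := hsub.pow 2
      have hm := hsub.const_mul (2 * b)
      have := (hp.add hm).add_const (2 * b ^ 2)
      refine this.congr_deriv ?_
      push_cast
      try simp only [id_eq]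
      ring
    have h4 := (h2.mul h3).const_mul (-(1 / 2) : ℝ)
    have hbne : b ≠ 0 := ne_of_gt hb
    refine h4.congr_deriv ?_
    field_simp
    ring
  have hpos : ∀ x ∈ Ioi Δ, 0 ≤ (x - Δ) ^ 2 * ((1 / (2 * b)) * Real.exp (-x / b)) := by
    intro x _; positivity
  have htend : Tendsto g atTop (nhds 0) := by
    have h0 := (tq_tendsto b hb 0).const_mul (-(1 / 2) * (Δ ^ 2 - 2 * b * Δ + 2 * b ^ 2))
    have h1 := (tq_tendsto b hb 1).const_mul (-(1 / 2) * (2 * Δ - 2 * b) * (-1))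
    have h2 := (tq_tendsto b hb 2).const_mul (-(1 / 2) : ℝ)
    have H := (h2.add h1).add h0
    simp only [mul_zero, add_zero] at H
    refine H.congr fun w => ?_
    simp only [hg, pow_zero, pow_one]
    ring
  refine ⟨?_, ?_⟩
  · exact integrableOn_Ioi_deriv_of_nonneg' (fun x _ => hderiv x) hpos htend
  · have := integral_Ioi_of_hasDerivAt_of_nonneg' (fun x _ => hderiv x) hpos htend
    rw [this, hg]
    simp only
    ring

/-- Laplace MSE of ternary quantization and its unique minimizer `Δ* = √2·b = σ`. -/
theorem stmt_5 (b : ℝ) (hb : 0 < b)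
    (p : ℝ → ℝ) (hp : ∀ w, p w = (1 / (2 * b)) * Real.exp (-|w| / b))
    (MSE : ℝ → ℝ)
    (hMSE : ∀ Δ, MSE Δ = ∫ w, (w - ternaryQuant Δ w) ^ 2 * p w) :
    (∀ Δ > 0, MSE Δ =
        Real.exp (-Δ / b) * (2 * b ^ 2 * Real.exp (Δ / b) - 2 * b * Δ - Δ ^ 2)) ∧
    (∀ Δ > 0, Δ ≠ Real.sqrt 2 * b → MSE (Real.sqrt 2 * b) < MSE Δ) ∧
    Real.sqrt 2 * b = Real.sqrt (2 * b ^ 2) := by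
  -- main formula
  have key : ∀ Δ : ℝ, 0 < Δ →
      MSE Δ = 2 * b ^ 2 - Real.exp (-Δ / b) * (Δ ^ 2 + 2 * b * Δ) := by
    intro Δ hΔ
    set f : ℝ → ℝ := fun w => (w - ternaryQuant Δ w) ^ 2 * p w with hf
    have hfeven : ∀ w, f (-w) = f w := by
      intro w
      have hq : ternaryQuant Δ (-w) = -ternaryQuant Δ w := by
        unfold ternaryQuant
        split_ifs <;> linarith
      simp only [hf, hq, hp, abs_neg]
      ring
    -- the right tail
    obtain ⟨hint3, hval3⟩ := tq_int_Ioi b Δ hb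
    have hfr : ∀ w ∈ Ioi Δ, f w = (w - Δ) ^ 2 * ((1 / (2 * b)) * Real.exp (-w / b)) := by
      intro w hw
      simp only [mem_Ioi] at hw
      have hq : ternaryQuant Δ w = Δ := by unfold ternaryQuant; rw [if_pos hw]
      have habs : |w| = w := abs_of_pos (lt_trans hΔ hw)
      simp only [hf, hq, hp, habs]
    have hintIoi : IntegrableOn f (Ioi Δ) :=
      hint3.congr_fun (fun w hw => (hfr w hw).symm) measurableSet_Ioi
    have hvalIoi : ∫ w in Ioi Δ, f w = b ^ 2 * Real.exp (-Δ / b) := by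
      rw [setIntegral_congr_fun measurableSet_Ioi hfr, hval3]
    -- the left tail via symmetry
    have hvalIic : ∫ w in Iic (-Δ), f w = b ^ 2 * Real.exp (-Δ / b) := by
      have hc := integral_comp_neg_Iic (-Δ) f
      rw [neg_neg] at hc
      calc ∫ w in Iic (-Δ), f w = ∫ w in Iic (-Δ), f (-w) :=
            setIntegral_congr_fun measurableSet_Iic fun x _ => (hfeven x).symm
        _ = ∫ w in Ioi Δ, f w := hc
        _ = b ^ 2 * Real.exp (-Δ / b) := hvalIoi
    have hintIic : IntegrableOn f (Iic (-Δ)) := by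
      have h1 : IntegrableOn (fun x => f (-x)) (Iio (-Δ)) := by
        have hI := (MeasurePreserving.integrableOn_comp_preimage
          (Measure.measurePreserving_neg (volume : Measure ℝ))
          (Homeomorph.neg ℝ).measurableEmbedding).2 hintIoi
        have hpre : (Neg.neg ⁻¹' Ioi Δ : Set ℝ) = Iio (-Δ) := by
          ext x
          simp only [mem_preimage, mem_Ioi, mem_Iio]
          constructor <;> intro hx <;> linarith
        rw [hpre] at hI
        exact hI
      have h2 : IntegrableOn f (Iio (-Δ)) :=
        h1.congr_fun (fun x _ => hfeven x) measurableSet_Iio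
      exact h2.congr_set_ae Iio_ae_eq_Iic.symm
    -- the middle
    have hfm : ∀ w ∈ Ioc (-Δ) Δ, f w = w ^ 2 * ((1 / (2 * b)) * Real.exp (-|w| / b)) := by
      intro w hw
      simp only [mem_Ioc] at hw
      have hq : ternaryQuant Δ w = 0 := by
        unfold ternaryQuant
        rw [if_neg (by linarith), if_neg (by linarith)]
      simp only [hf, hq, hp, sub_zero]
    have hcont : Continuous fun w : ℝ => w ^ 2 * ((1 / (2 * b)) * Real.exp (-|w| / b)) := by
      fun_prop
    have hintm : IntegrableOn f (Ioc (-Δ) Δ) := by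
      refine (hcont.integrableOn_Ioc).congr_fun (fun w hw => (hfm w hw).symm) measurableSet_Ioc
    have hvalm : ∫ w in Ioc (-Δ) Δ, f w
        = 2 * b ^ 2 - Real.exp (-Δ / b) * (Δ ^ 2 + 2 * b * Δ + 2 * b ^ 2) := by
      rw [setIntegral_congr_fun measurableSet_Ioc hfm,
        ← intervalIntegral.integral_of_le (by linarith : -Δ ≤ Δ)]
      have hii : ∀ a c : ℝ, IntervalIntegrable
          (fun w : ℝ => w ^ 2 * ((1 / (2 * b)) * Real.exp (-|w| / b))) volume a c :=
        fun a c => hcont.intervalIntegrable a c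
      rw [← intervalIntegral.integral_add_adjacent_intervals (hii (-Δ) 0) (hii 0 Δ)]
      have left_eq : ∫ w in (-Δ)..0, w ^ 2 * ((1 / (2 * b)) * Real.exp (-|w| / b))
          = b ^ 2 - (1 / 2) * Real.exp (-Δ / b) * (Δ ^ 2 + 2 * b * Δ + 2 * b ^ 2) := by
        have hcg : ∀ w ∈ uIcc (-Δ) (0 : ℝ),
            w ^ 2 * ((1 / (2 * b)) * Real.exp (-|w| / b))
              = w ^ 2 * ((1 / (2 * b)) * Real.exp (w / b)) := by
          intro w hw
          rw [uIcc_of_le (by linarith), mem_Icc] at hw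
          rw [abs_of_nonpos hw.2, neg_neg]
        rw [intervalIntegral.integral_congr hcg]
        have hder : ∀ x : ℝ, HasDerivAt
            (fun w : ℝ => (1 / 2) * (Real.exp (w / b) * (w ^ 2 - 2 * b * w + 2 * b ^ 2)))
            (x ^ 2 * ((1 / (2 * b)) * Real.exp (x / b))) x := by
          intro x
          have h1 : HasDerivAt (fun w : ℝ => w / b) (1 / b) x := by
            simpa using (hasDerivAt_id x).div_const b
          have h2 := h1.exp
          have h3 : HasDerivAt (fun w : ℝ => w ^ 2 - 2 * b * w + 2 * b ^ 2)
              (2 * x - 2 * b) x := by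
            have hp2 := (hasDerivAt_id x).pow 2
            have hm := (hasDerivAt_id x).const_mul (2 * b)
            have := (hp2.sub hm).add_const (2 * b ^ 2)
            refine this.congr_deriv ?_
            push_cast
            try simp only [id_eq]
            ring
          have h4 := (h2.mul h3).const_mul ((1 : ℝ) / 2)
          have hbne : b ≠ 0 := ne_of_gt hb
          refine h4.congr_deriv ?_
          field_simp
          ring
        rw [intervalIntegral.integral_eq_sub_of_hasDerivAt (fun x _ => hder x)
          ((by fun_prop : Continuous fun w : ℝ =>
            w ^ 2 * ((1 / (2 * b)) * Real.exp (w / b))).intervalIntegrable _ _)]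
        simp only [zero_div, Real.exp_zero]
        ring
      have right_eq : ∫ w in (0 : ℝ)..Δ, w ^ 2 * ((1 / (2 * b)) * Real.exp (-|w| / b))
          = b ^ 2 - (1 / 2) * Real.exp (-Δ / b) * (Δ ^ 2 + 2 * b * Δ + 2 * b ^ 2) := by
        have hcg : ∀ w ∈ uIcc (0 : ℝ) Δ,
            w ^ 2 * ((1 / (2 * b)) * Real.exp (-|w| / b))
              = w ^ 2 * ((1 / (2 * b)) * Real.exp (-w / b)) := by
          intro w hw
          rw [uIcc_of_le (by linarith), mem_Icc] at hw
          rw [abs_of_nonneg hw.1]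
        rw [intervalIntegral.integral_congr hcg]
        have hder : ∀ x : ℝ, HasDerivAt
            (fun w : ℝ => -(1 / 2) * (Real.exp (-w / b) * (w ^ 2 + 2 * b * w + 2 * b ^ 2)))
            (x ^ 2 * ((1 / (2 * b)) * Real.exp (-x / b))) x := by
          intro x
          have h1 : HasDerivAt (fun w : ℝ => -w / b) (-1 / b) x := by
            simpa using (hasDerivAt_id x).neg.div_const b
          have h2 := h1.exp
          have h3 : HasDerivAt (fun w : ℝ => w ^ 2 + 2 * b * w + 2 * b ^ 2)
              (2 * x + 2 * b) x := by
            have hp2 := (hasDerivAt_id x).pow 2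
            have hm := (hasDerivAt_id x).const_mul (2 * b)
            have := (hp2.add hm).add_const (2 * b ^ 2)
            refine this.congr_deriv ?_
            push_cast
            try simp only [id_eq]
            ring
          have h4 := (h2.mul h3).const_mul (-(1 / 2) : ℝ)
          have hbne : b ≠ 0 := ne_of_gt hb
          refine h4.congr_deriv ?_
          field_simp
          ring
        rw [intervalIntegral.integral_eq_sub_of_hasDerivAt (fun x _ => hder x)
          ((by fun_prop : Continuous fun w : ℝ =>
            w ^ 2 * ((1 / (2 * b)) * Real.exp (-w / b))).intervalIntegrable _ _)]
        simp only [neg_zero, zero_div, Real.exp_zero]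
        ring
      rw [left_eq, right_eq]
      ring
    -- assemble
    have hunion : (Iic (-Δ) : Set ℝ) ∪ Ioc (-Δ) Δ = Iic Δ :=
      Iic_union_Ioc_eq_Iic (by linarith)
    have hdisj : Disjoint (Iic (-Δ) : Set ℝ) (Ioc (-Δ) Δ) := Iic_disjoint_Ioc le_rfl
    have hintIicΔ : IntegrableOn f (Iic Δ) := by
      rw [← hunion]; exact hintIic.union hintm
    have hvalIicΔ : ∫ w in Iic Δ, f w
        = (∫ w in Iic (-Δ), f w) + ∫ w in Ioc (-Δ) Δ, f w := by
      rw [← hunion]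
      exact setIntegral_union hdisj measurableSet_Ioc hintIic hintm
    have htotal : (∫ w in Iic Δ, f w) + ∫ w in Ioi Δ, f w = ∫ w, f w :=
      intervalIntegral.integral_Iic_add_Ioi hintIicΔ hintIoi
    rw [hMSE Δ, show (∫ w, (w - ternaryQuant Δ w) ^ 2 * p w) = ∫ w, f w from rfl,
      ← htotal, hvalIicΔ, hvalIic, hvalm, hvalIoi]
    ring
  have hs2 : (Real.sqrt 2 * b) ^ 2 = 2 * b ^ 2 := by
    rw [mul_pow, Real.sq_sqrt (by norm_num : (2:ℝ) ≥ 0)]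
  have hs0 : 0 < Real.sqrt 2 * b := mul_pos (Real.sqrt_pos.2 (by norm_num)) hb
  refine ⟨?_, ?_, ?_⟩
  · intro Δ hΔ
    have h1 : Real.exp (-Δ / b) * Real.exp (Δ / b) = 1 := by
      rw [← Real.exp_add]; rw [show -Δ / b + Δ / b = 0 by ring, Real.exp_zero]
    rw [key Δ hΔ]
    linear_combination (-(2 * b ^ 2)) * h1
  · intro Δ hΔ hne
    set s := Real.sqrt 2 * b with hsdef
    set h : ℝ → ℝ := fun x => Real.exp (-x / b) * (x ^ 2 + 2 * b * x) with hh
    have hderiv : ∀ x : ℝ, HasDerivAt h (Real.exp (-x / b) * ((2 * b ^ 2 - x ^ 2) / b)) x := by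
      intro x
      have h1 : HasDerivAt (fun w : ℝ => -w / b) (-1 / b) x := by
        simpa using (hasDerivAt_id x).neg.div_const b
      have h2 := h1.exp
      have h3 : HasDerivAt (fun w : ℝ => w ^ 2 + 2 * b * w) (2 * x + 2 * b) x := by
        have hp2 := (hasDerivAt_id x).pow 2
        have hm := (hasDerivAt_id x).const_mul (2 * b)
        have := hp2.add hm
        refine this.congr_deriv ?_
        push_cast
        try simp only [id_eq]
        ring
      have h4 := h2.mul h3
      have hbne : b ≠ 0 := ne_of_gt hb
      refine h4.congr_deriv ?_
      field_simp
      ring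
    have hcont : Continuous h := by fun_prop
    have hmono : StrictMonoOn h (Icc 0 s) := by
      refine strictMonoOn_of_deriv_pos (convex_Icc 0 s) hcont.continuousOn ?_
      intro x hx
      rw [interior_Icc, mem_Ioo] at hx
      rw [(hderiv x).deriv]
      have hx2 : x ^ 2 < 2 * b ^ 2 := by
        have := sq_lt_sq' (by linarith : -s < x) hx.2
        rw [hs2] at this; exact this
      exact mul_pos (Real.exp_pos _) (div_pos (by linarith) hb)
    have hanti : StrictAntiOn h (Ici s) := by
      refine strictAntiOn_of_deriv_neg (convex_Ici s) hcont.continuousOn ?_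
      intro x hx
      rw [interior_Ici, mem_Ioi] at hx
      rw [(hderiv x).deriv]
      have hx2 : 2 * b ^ 2 < x ^ 2 := by
        rw [← hs2]
        exact pow_lt_pow_left₀ hx hs0.le (by norm_num)
      have : (2 * b ^ 2 - x ^ 2) / b < 0 := div_neg_of_neg_of_pos (by linarith) hb
      exact mul_neg_of_pos_of_neg (Real.exp_pos _) this
    have hlt : h Δ < h s := by
      rcases lt_trichotomy Δ s with hc | hc | hc
      · exact hmono ⟨hΔ.le, hc.le⟩ ⟨hΔ.le.trans hc.le, le_rfl⟩ hc
      · exact absurd hc hne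
      · exact hanti self_mem_Ici hc.le hc
    rw [key Δ hΔ, key s hs0]
    simp only [hh] at hlt
    linarith
  · rw [Real.sqrt_mul (by norm_num : (0:ℝ) ≤ 2), Real.sqrt_sq hb.le]
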